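/- arXiv:2401.05523 — 5 statements merged into one kernel-verified Lean document; each statement's English description precedes it below -/
import Mathlib

section
/- If G is an almost bipartite graph (a graph with exactly one odd cycle), then n(G) - 1 ≤ α(G) + μ(G) ≤ n(G). -/
open SimpleGraph

variable {V : Type*}

/-- A set of vertices is independent: no two of its vertices are adjacent. -/
def IsIndep (G : SimpleGraph V) (s : Set V) : Prop :=
  s.Pairwise fun a b => ¬ G.Adj a b

/-- The independence number α(G). -/
noncomputable def alphaNum (G : SimpleGraph V) : ℕ :=
  sSup {n | ∃ s : Set V, IsIndep G s ∧ s.ncard = n}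

/-- The matching number μ(G). -/
noncomputable def muNum (G : SimpleGraph V) : ℕ :=
  sSup {n | ∃ M : SimpleGraph.Subgraph G, M.IsMatching ∧ M.edgeSet.ncard = n}

/-- The neighborhood N(A) of a set of vertices. -/
def nbhd (G : SimpleGraph V) (A : Set V) : Set V := {v | ∃ a ∈ A, G.Adj a v}

/-- The difference d(A) = |A| - |N(A)| of a set of vertices. -/
noncomputable def diffSet (G : SimpleGraph V) (A : Set V) : ℤ :=
  (A.ncard : ℤ) - (nbhd G A).ncard

/-- The critical difference d(G). -/
noncomputable def critDiff (G : SimpleGraph V) : ℤ :=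
  sSup {d | ∃ I : Set V, IsIndep G I ∧ diffSet G I = d}

/-- A critical independent set: an independent set attaining the critical difference. -/
def IsCriticalIndep (G : SimpleGraph V) (A : Set V) : Prop :=
  IsIndep G A ∧ diffSet G A = critDiff G

/-- ker(G): the intersection of all critical independent sets. -/
noncomputable def kerSet (G : SimpleGraph V) : Set V :=
  ⋂₀ {A | IsCriticalIndep G A}

/-- A maximum independent set. -/
noncomputable def IsMaxIndep (G : SimpleGraph V) (S : Set V) : Prop :=
  IsIndep G S ∧ S.ncard = alphaNum G

/-- core(G): the intersection of all maximum independent sets. -/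
noncomputable def coreSet (G : SimpleGraph V) : Set V :=
  ⋂₀ {S | IsMaxIndep G S}

/-- A König–Egerváry graph: α(G) + μ(G) = n(G). -/
def KonigEgervary (G : SimpleGraph V) : Prop :=
  alphaNum G + muNum G = Nat.card V

/-- A graph is almost bipartite if it has exactly one odd cycle
(cycles being identified with their edge sets). -/
def AlmostBipartite (G : SimpleGraph V) : Prop :=
  ∃! s : Set (Sym2 V), ∃ (v : V) (w : G.Walk v v),
    w.IsCycle ∧ Odd w.length ∧ s = {e | e ∈ w.edges}


/-!
Delete an edge `e` of the unique odd cycle. Any odd closed walk contains an odd cycle, and every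
odd cycle of `G` passes through `e`, so `G - e` is bipartite. Bipartite graphs are
König–Egerváry: if `S ⊆ A` maximizes the deficiency `δ = |S| - |N(S)|` on one side `A` of the
bipartition, then Hall's theorem with deficiency `δ` yields a matching with `|A| - δ` edges, while
`(S ∪ Aᶜ) \ N(S)` is an independent set of size `|Aᶜ| + δ`. Putting `e` back lowers `α` by
at most one and does not lower `μ`. The upper bound holds in every graph, since each edge of a
matching has an endpoint outside any given independent set.
-/

theorem Set.ncard_le_ncard_of_forall_subsingleton {α β : Type*} {s : Set α} {t : Set β}
    (r : α → β → Prop) (hs : ∀ a ∈ s, ∃ b ∈ t, r a b)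
    (ht : ∀ b ∈ t, {a | a ∈ s ∧ r a b}.Subsingleton) (htf : t.Finite := by toFinite_tac) :
    s.ncard ≤ t.ncard := by
  obtain hsf | hsf := s.finite_or_infinite
  · rw [ncard_eq_toFinset_card s hsf, ncard_eq_toFinset_card t htf]
    exact Finset.card_le_card_of_forall_subsingleton r (by simpa using hs) (by simpa using ht)
  · simp [hsf.ncard]

open Finset in
theorem Finset.exists_injective_of_card_le_card_biUnion_add {ι α : Type*} [Fintype ι]
    [DecidableEq α] (t : ι → Finset α) (d : ℕ) (ht : ∀ s : Finset ι, #s ≤ #(s.biUnion t) + d) :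
    ∃ (s : Finset ι) (f : s → α),
      Fintype.card ι ≤ #s + d ∧ Function.Injective f ∧ ∀ i : s, f i ∈ t i := by
  classical
  -- Hall's theorem, after adding `d` new elements that every `t i` may use.
  obtain ⟨g, hg, hgt⟩ := (all_card_le_biUnion_card_iff_exists_injective
    fun i => (t i).disjSum (univ : Finset (Fin d))).mp fun s => by
      rcases s.eq_empty_or_nonempty with rfl | ⟨i, hi⟩
      · simp
      have : (s.biUnion t).disjSum (univ : Finset (Fin d)) ⊆
          s.biUnion fun i => (t i).disjSum univ := by
        intro x hx
        simp only [mem_disjSum, mem_biUnion] at hx ⊢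
        rcases hx with ⟨a, ⟨j, hj, ha⟩, rfl⟩ | ⟨b, -, rfl⟩
        · exact ⟨j, hj, Or.inl ⟨a, ha, rfl⟩⟩
        · exact ⟨i, hi, Or.inr ⟨b, mem_univ b, rfl⟩⟩
      have := card_le_card this
      rw [card_disjSum, card_univ, Fintype.card_fin] at this
      exact (ht s).trans this
  let s : Finset ι := {i | (g i).isLeft}
  refine ⟨s, fun i => (g i).getLeft (mem_filter.mp i.2).2, ?_, fun i j hij => ?_, fun i => ?_⟩
  · have : #sᶜ ≤ #(univ.map (Function.Embedding.inr : Fin d ↪ α ⊕ Fin d)) := by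
      refine card_le_card_of_injOn g (fun i hi => ?_) hg.injOn
      have hr : (g i).isRight := by simpa [s] using hi
      simpa using ⟨(g i).getRight hr, Sum.inr_getRight _ hr⟩
    rw [card_map, card_univ, Fintype.card_fin] at this
    have := card_compl_add_card s
    omega
  · have := congrArg (Sum.inl : α → α ⊕ Fin d) hij
    simp only [Sum.inl_getLeft] at this
    exact Subtype.ext (hg this)
  · have := hgt i
    rwa [← Sum.inl_getLeft (g i) (mem_filter.mp i.2).2, inl_mem_disjSum] at this

namespace SimpleGraph

variable {G : SimpleGraph V}

theorem Walk.exists_isCycle_odd_of_odd_length {u : V} (p : G.Walk u u) (hp : Odd p.length) :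
    ∃ (v : V) (c : G.Walk v v), c.IsCycle ∧ Odd c.length := by
  induction hn : p.length using Nat.strong_induction_on generalizing u with
  | _ n ih =>
  cases p with
  | nil => simp at hp
  | @cons _ v _ h q =>
    by_cases hq : q.IsPath
    · refine ⟨u, cons h q, isCycle_iff_isPath_tail_and_le_length.mpr ⟨by simpa, ?_⟩, hp⟩
      have hq0 : q.length ≠ 0 := fun h0 => h.ne (q.eq_of_length_eq_zero h0).symm
      rw [length_cons] at hp
      obtain ⟨k, hk⟩ := hp
      simp only [length_cons]
      omega
    · -- Cut a closed subwalk `c` out of `q`; one of `c` and the remaining closed walk is odd.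
      obtain ⟨x, c, ⟨a, b, rfl⟩, hc⟩ : ∃ (x : V) (c : G.Walk x x), c.IsSubwalk q ∧ ¬ c.Nil := by
        simpa using mt isPath_iff_isSubwalk_imp_nil.mpr hq
      rw [not_nil_iff_lt_length] at hc
      simp only [length_cons, length_append] at hn hp
      rcases Nat.even_or_odd c.length with hce | hco
      · refine ih (a.length + b.length + 1) (by omega) (cons h (a.append b)) ?_
          (by simp only [length_cons, length_append])
        simp only [length_cons, length_append]
        rw [show a.length + c.length + b.length + 1 = (a.length + b.length + 1) + c.length by ring]
          at hp
        exact (Nat.odd_add.mp hp).mpr hce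
      · exact ih _ (by omega) c hco rfl

theorem isBipartite_of_forall_isCycle_not_odd
    (h : ∀ (v : V) (c : G.Walk v v), c.IsCycle → ¬ Odd c.length) : G.IsBipartite :=
  two_colorable_iff_forall_loop_even.mpr fun _ p => Nat.not_odd_iff_even.mp fun hp =>
    let ⟨v, c, hc, hco⟩ := p.exists_isCycle_odd_of_odd_length hp
    h v c hc hco

theorem IsBipartiteWith.mem_iff_notMem_of_adj {A B : Set V} (hAB : G.IsBipartiteWith A B)
    {x y : V} (hxy : G.Adj x y) : x ∈ A ↔ y ∉ A := by
  rcases hAB.mem_of_adj hxy with ⟨hx, hy⟩ | ⟨hx, hy⟩ <;>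
    simp [hx, hy, hAB.disjoint.notMem_of_mem_right]

theorem Subgraph.IsMatching.eq_of_mem_edgeSet {M : G.Subgraph} (hM : M.IsMatching) {v : V}
    {e e' : Sym2 V} (he : e ∈ M.edgeSet) (he' : e' ∈ M.edgeSet) (hv : v ∈ e) (hv' : v ∈ e') :
    e = e' := by
  obtain ⟨w, rfl⟩ := Sym2.mem_iff_exists.mp hv
  obtain ⟨w', rfl⟩ := Sym2.mem_iff_exists.mp hv'
  rw [hM.eq_of_adj_left (M.mem_edgeSet.mp he) (M.mem_edgeSet.mp he')]

end SimpleGraph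

open SimpleGraph

theorem AlmostBipartite.exists_isBipartite_deleteEdges {G : SimpleGraph V}
    (h : AlmostBipartite G) : ∃ e, (G.deleteEdges {e}).IsBipartite := by
  obtain ⟨_, ⟨v, w, hw, -, rfl⟩, huniq⟩ := h
  obtain ⟨e, he⟩ := List.exists_mem_of_ne_nil _ (Walk.edges_eq_nil.not.mpr hw.not_nil)
  refine ⟨e, isBipartite_of_forall_isCycle_not_odd fun x c hc hco => ?_⟩
  have hce : {f | f ∈ (c.mapLe (deleteEdges_le {e})).edges} = {f | f ∈ w.edges} :=
    huniq _ ⟨x, _, (Walk.isCycle_mapLe _).mpr hc, by rwa [Walk.length_mapLe], rfl⟩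
  have : e ∈ (G.deleteEdges {e}).edgeSet := by
    have : e ∈ {f | f ∈ (c.mapLe (deleteEdges_le {e})).edges} := hce ▸ he
    exact c.edges_subset_edgeSet (by simpa only [Walk.edges_mapLe_eq_edges, Set.mem_ofPred_eq])
  simp [edgeSet_deleteEdges] at this

section Finite

variable [Finite V]

theorem bddAbove_ncard_isIndep (G : SimpleGraph V) :
    BddAbove {n | ∃ s : Set V, IsIndep G s ∧ s.ncard = n} :=
  ⟨Nat.card V, by rintro _ ⟨s, -, rfl⟩; exact Set.ncard_le_card s⟩

theorem bddAbove_ncard_edgeSet_isMatching (G : SimpleGraph V) :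
    BddAbove {n | ∃ M : G.Subgraph, M.IsMatching ∧ M.edgeSet.ncard = n} :=
  ⟨Nat.card (Sym2 V), by rintro _ ⟨M, -, rfl⟩; exact Set.ncard_le_card _⟩

theorem exists_isIndep_ncard_eq_alphaNum (G : SimpleGraph V) :
    ∃ s : Set V, IsIndep G s ∧ s.ncard = alphaNum G :=
  Nat.sSup_mem (s := {n | ∃ s : Set V, IsIndep G s ∧ s.ncard = n})
    ⟨0, ∅, by simp [IsIndep], Set.ncard_empty V⟩ (bddAbove_ncard_isIndep G)

theorem exists_isMatching_ncard_edgeSet_eq_muNum (G : SimpleGraph V) :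
    ∃ M : G.Subgraph, M.IsMatching ∧ M.edgeSet.ncard = muNum G :=
  Nat.sSup_mem (s := {n | ∃ M : G.Subgraph, M.IsMatching ∧ M.edgeSet.ncard = n})
    ⟨0, ⊥, by simp [Subgraph.IsMatching], by simp⟩ (bddAbove_ncard_edgeSet_isMatching G)

variable {G : SimpleGraph V}

theorem IsIndep.ncard_le_alphaNum {s : Set V} (hs : IsIndep G s) : s.ncard ≤ alphaNum G :=
  le_csSup (bddAbove_ncard_isIndep G) ⟨s, hs, rfl⟩

theorem SimpleGraph.Subgraph.IsMatching.ncard_edgeSet_le_muNum {M : G.Subgraph}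
    (hM : M.IsMatching) : M.edgeSet.ncard ≤ muNum G :=
  le_csSup (bddAbove_ncard_edgeSet_isMatching G) ⟨M, hM, rfl⟩

theorem IsIndep.ncard_add_ncard_edgeSet_le {s : Set V} {M : G.Subgraph} (hs : IsIndep G s)
    (hM : M.IsMatching) : s.ncard + M.edgeSet.ncard ≤ Nat.card V := by
  have : M.edgeSet.ncard ≤ sᶜ.ncard := by
    refine Set.ncard_le_ncard_of_forall_subsingleton (fun e v => v ∈ e) ?_
      fun v _ e he e' he' => hM.eq_of_mem_edgeSet he.1 he'.1 he.2 he'.2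
    refine Sym2.ind fun a b hab => ?_
    by_cases ha : a ∈ s
    · exact ⟨b, fun hb => hs ha hb (M.adj_sub hab).ne (M.adj_sub hab), Sym2.mem_mk_right a b⟩
    · exact ⟨a, ha, Sym2.mem_mk_left a b⟩
  have := Set.ncard_add_ncard_compl s
  omega

theorem alphaNum_add_muNum_le (G : SimpleGraph V) : alphaNum G + muNum G ≤ Nat.card V := by
  obtain ⟨s, hs, hα⟩ := exists_isIndep_ncard_eq_alphaNum G
  obtain ⟨M, hM, hμ⟩ := exists_isMatching_ncard_edgeSet_eq_muNum G
  exact hα ▸ hμ ▸ hs.ncard_add_ncard_edgeSet_le hM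

theorem IsIndep.ncard_le_ncard_edgeSet {s : Set V} {M : G.Subgraph} (hs : IsIndep G s)
    (hsM : s ⊆ M.support) : s.ncard ≤ M.edgeSet.ncard := by
  refine Set.ncard_le_ncard_of_forall_subsingleton (fun v e => v ∈ e)
    (fun v hv => ?_) fun e he v hv w hw => ?_
  · obtain ⟨w, hvw⟩ := hsM hv
    exact ⟨s(v, w), hvw, Sym2.mem_mk_left v w⟩
  · by_contra hne
    have hadj : s(v, w) ∈ M.edgeSet := (Sym2.mem_and_mem_iff hne).mp ⟨hv.2, hw.2⟩ ▸ he
    exact hs hv.1 hw.1 hne (M.adj_sub hadj)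

theorem IsIndep.ncard_le_muNum_of_injective {s : Set V} (hs : IsIndep G s) (f : s → V)
    (hf : Function.Injective f) (hadj : ∀ x : s, G.Adj x (f x)) : s.ncard ≤ muNum G := by
  have hdisj : Disjoint s (Set.range f) := Set.disjoint_left.mpr fun x hx ⟨y, hy⟩ =>
    hs y.2 hx (hy ▸ hadj y).ne (hy ▸ hadj y)
  obtain ⟨M, hMverts, hM⟩ :=
    Subgraph.IsMatching.exists_of_disjoint_sets_of_equiv hdisj (Equiv.ofInjective f hf) hadj
  exact (hs.ncard_le_ncard_edgeSet (hM.support_eq_verts ▸ hMverts ▸ Set.subset_union_left)).trans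
    hM.ncard_edgeSet_le_muNum

open Finset in
theorem SimpleGraph.IsBipartite.konigEgervary (hG : G.IsBipartite) : KonigEgervary G := by
  classical
  have := Fintype.ofFinite V
  refine le_antisymm (alphaNum_add_muNum_le G) ?_
  obtain ⟨A, B, hAB⟩ := hG.exists_isBipartiteWith
  -- `S.biUnion N` is the neighbourhood of `S ∩ A`.
  let N : V → Finset V := fun x => {y | G.Adj x y ∧ y ∉ A}
  obtain ⟨S, -, hS⟩ := exists_max_image univ (fun S => (#S : ℤ) - #(S.biUnion N)) univ_nonempty
  have hd : ∀ T, #T ≤ #(T.biUnion N) + (#S - #(S.biUnion N)) := fun T => by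
    have := hS T (mem_univ T)
    have := hS ∅ (mem_univ ∅)
    simp only [card_empty, biUnion_empty] at this
    omega
  obtain ⟨P, f, hP, hf, hfN⟩ := exists_injective_of_card_le_card_biUnion_add N _ hd
  have hPA : ∀ x : P, x.1 ∈ A := fun x => by
    obtain ⟨hadj, hfx⟩ : G.Adj x (f x) ∧ f x ∉ A := by simpa [N] using hfN x
    simpa [hfx] using hAB.mem_iff_notMem_of_adj hadj
  have hμ : #P ≤ muNum G := by
    rw [← Set.ncard_coe_finset]
    refine IsIndep.ncard_le_muNum_of_injective (fun x hx y hy _ hxy => ?_) f hf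
      fun x => (mem_filter.mp (hfN x)).2.1
    exact (hAB.mem_iff_notMem_of_adj hxy).mp (hPA ⟨x, hx⟩) (hPA ⟨y, hy⟩)
  let I : Finset V := (S ∪ ({y | y ∉ A} : Finset V)) \ S.biUnion N
  have hI : IsIndep G (I : Set V) := by
    have key : ∀ x ∈ I, ∀ y ∈ I, G.Adj x y → x ∉ A := fun x hx y hy hxy hxA => by
      have hxS : x ∈ S := by simpa [I, hxA] using (mem_sdiff.mp hx).1
      refine (mem_sdiff.mp hy).2 (mem_biUnion.mpr ⟨x, hxS, ?_⟩)
      simpa [N, hxy] using (hAB.mem_iff_notMem_of_adj hxy).mp hxA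
    intro x hx y hy _ hxy
    exact (hAB.mem_iff_notMem_of_adj hxy).not.mp (key x hx y hy hxy) (key y hy x hx hxy.symm)
  have hα : #S - #(S.biUnion N) ≤ alphaNum G := calc
    _ ≤ #(S \ S.biUnion N) := le_card_sdiff _ _
    _ ≤ #I := card_le_card (sdiff_subset_sdiff subset_union_left subset_rfl)
    _ ≤ alphaNum G := Set.ncard_coe_finset I ▸ hI.ncard_le_alphaNum
  rw [Nat.card_eq_fintype_card]
  omega

theorem muNum_mono {G G' : SimpleGraph V} (h : G ≤ G') : muNum G ≤ muNum G' := by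
  obtain ⟨M, hM, hμ⟩ := exists_isMatching_ncard_edgeSet_eq_muNum G
  have := (hM.map_ofLE h).ncard_edgeSet_le_muNum
  rwa [Subgraph.edgeSet_map, Hom.coe_ofLE, Sym2.map_id, Set.image_id, hμ] at this

theorem alphaNum_deleteEdges_le (G : SimpleGraph V) (e : Sym2 V) :
    alphaNum (G.deleteEdges {e}) ≤ alphaNum G + 1 := by
  obtain ⟨s, hs, hα⟩ := exists_isIndep_ncard_eq_alphaNum (G.deleteEdges {e})
  induction e using Sym2.ind with | _ a b =>
  have : IsIndep G (s \ {a}) := fun x hx y hy hxy hadj => by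
    refine hs hx.1 hy.1 hxy (deleteEdges_adj.mpr ⟨hadj, fun hab => ?_⟩)
    rcases Sym2.eq_iff.mp hab with ⟨rfl, -⟩ | ⟨-, rfl⟩
    exacts [hx.2 rfl, hy.2 rfl]
  have := this.ncard_le_alphaNum
  have := Set.ncard_le_ncard_sdiff_add_ncard s {a}
  rw [Set.ncard_singleton] at this
  omega

end Finite

theorem stmt_1 [Fintype V] (G : SimpleGraph V) (h : AlmostBipartite G) :
    Nat.card V - 1 ≤ alphaNum G + muNum G ∧ alphaNum G + muNum G ≤ Nat.card V := by
  obtain ⟨e, he⟩ := h.exists_isBipartite_deleteEdges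
  have hKE : KonigEgervary (G.deleteEdges {e}) := he.konigEgervary
  have := alphaNum_deleteEdges_le G e
  have := muNum_mono (G.deleteEdges_le {e})
  exact ⟨by unfold KonigEgervary at hKE; omega, alphaNum_add_muNum_le G⟩
end

section
/- If G is a König-Egerváry graph without isolated vertices and core(G) = {v} is a singleton, then G has a perfect matching and v has degree 1. -/
open SimpleGraph

variable {V : Type*}

/-!
Fix a maximum matching `M`. In a König–Egerváry graph every maximum independent set `S` has
`|S| + |M| = n`; since every edge of `M` has an end outside `S` and distinct edges have distinct
ends, every vertex outside `S` is matched by `M` into `S`. Consequently an `M`-unsaturated vertex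
lies in the core, and the `M`-partner of a neighbour of a core vertex lies in the core. With
`core(G) = {v}`, `M` saturates every vertex except possibly `v`, and every neighbour of `v` is
matched to `v`; as `v` has a neighbour, `M` is perfect and that neighbour is the only one.
-/

namespace SimpleGraph.Subgraph.IsMatching

variable {G : SimpleGraph V} {M : G.Subgraph}

lemma eq_of_mem_edgeSet_of_mem (hM : M.IsMatching) {e e' : Sym2 V} (he : e ∈ M.edgeSet)
    (he' : e' ∈ M.edgeSet) {x : V} (hx : x ∈ e) (hx' : x ∈ e') : e = e' := by
  obtain ⟨y, rfl⟩ := Sym2.mem_iff_exists.mp hx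
  obtain ⟨y', rfl⟩ := Sym2.mem_iff_exists.mp hx'
  rw [hM.eq_of_adj_left (Subgraph.mem_edgeSet.mp he) (Subgraph.mem_edgeSet.mp he')]

end SimpleGraph.Subgraph.IsMatching

def IsMaxMatching (G : SimpleGraph V) (M : G.Subgraph) : Prop :=
  M.IsMatching ∧ M.edgeSet.ncard = muNum G

section Finite

variable [Finite V] {G : SimpleGraph V}

lemma exists_isMaxMatching (G : SimpleGraph V) : ∃ M, IsMaxMatching G M :=
  Nat.sSup_mem (s := {n | ∃ M : G.Subgraph, M.IsMatching ∧ M.edgeSet.ncard = n})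
    ⟨0, ⊥, by simp [Subgraph.IsMatching]⟩
    ⟨Nat.card (Sym2 V), by
      rintro n ⟨M, -, rfl⟩
      exact Set.ncard_le_card _⟩

lemma IsIndep.exists_adj_mem_of_notMem {S : Set V} (hS : IsIndep G S) {M : G.Subgraph}
    (hM : M.IsMatching) (hcard : S.ncard + M.edgeSet.ncard = Nat.card V) {u : V} (hu : u ∉ S) :
    ∃ w ∈ S, M.Adj u w := by
  by_contra! hunmatched
  -- Choosing an end outside `S ∪ {u}` of each edge of `M` injects `M.edgeSet` into `Sᶜ \ {u}`,
  -- so `|M| < |Sᶜ|`.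
  have hend : ∀ a b, M.Adj a b → a ∉ S → ∃ x ∉ S, x ≠ u ∧ (x = a ∨ x = b) := by
    intro a b hab ha
    by_cases hau : a = u
    · subst hau
      exact ⟨b, fun hb => hunmatched b hb hab, hab.ne.symm, Or.inr rfl⟩
    · exact ⟨a, ha, hau, Or.inl rfl⟩
  have hex : ∀ e : M.edgeSet, ∃ x ∈ Sᶜ \ {u}, x ∈ (e : Sym2 V) := by
    rintro ⟨e, he⟩
    induction e with
    | _ a b =>
      obtain ⟨x, hxS, hxu, hx⟩ : ∃ x ∉ S, x ≠ u ∧ (x = a ∨ x = b) := by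
        by_cases ha : a ∈ S
        · obtain ⟨x, hxS, hxu, hx⟩ :=
            hend b a (M.adj_symm he) fun hb => hS ha hb (M.adj_sub he).ne (M.adj_sub he)
          exact ⟨x, hxS, hxu, hx.symm⟩
        · exact hend a b he ha
      exact ⟨x, ⟨hxS, hxu⟩, Sym2.mem_iff.mpr hx⟩
  choose f hfS hfe using hex
  have hinj : Function.Injective fun e => (⟨f e, hfS e⟩ : ↥(Sᶜ \ {u})) := fun e e' h => by
    have hff : f e = f e' := congrArg Subtype.val h
    exact Subtype.ext (hM.eq_of_mem_edgeSet_of_mem e.2 e'.2 (hfe e) (hff ▸ hfe e'))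
  have hle := Nat.card_le_card_of_injective _ hinj
  rw [Nat.card_coe_set_eq, Nat.card_coe_set_eq] at hle
  have hcompl := Set.ncard_add_ncard_compl S
  have hdel := Set.ncard_sdiff_singleton_add_one (Set.mem_compl hu)
  omega

lemma KonigEgervary.exists_adj_mem_of_notMem (hKE : KonigEgervary G) {S : Set V}
    (hS : IsMaxIndep G S) {M : G.Subgraph} (hM : IsMaxMatching G M) {u : V} (hu : u ∉ S) :
    ∃ w ∈ S, M.Adj u w :=
  hS.1.exists_adj_mem_of_notMem hM.1 (by rw [hS.2, hM.2]; exact hKE) hu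

lemma KonigEgervary.mem_coreSet_of_notMem_verts (hKE : KonigEgervary G) {M : G.Subgraph}
    (hM : IsMaxMatching G M) {u : V} (hu : u ∉ M.verts) : u ∈ coreSet G :=
  Set.mem_sInter.mpr fun S hS => by
    by_contra huS
    obtain ⟨w, -, huw⟩ := hKE.exists_adj_mem_of_notMem hS hM huS
    exact hu huw.fst_mem

lemma KonigEgervary.mem_coreSet_of_adj_of_adj (hKE : KonigEgervary G) {M : G.Subgraph}
    (hM : IsMaxMatching G M) {v w x : V} (hv : v ∈ coreSet G) (hvw : G.Adj v w)
    (hwx : M.Adj w x) : x ∈ coreSet G :=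
  Set.mem_sInter.mpr fun S hS => by
    have hwS : w ∉ S := fun hwS => hS.1 (Set.mem_sInter.mp hv S hS) hwS hvw.ne hvw
    obtain ⟨x', hx'S, hwx'⟩ := hKE.exists_adj_mem_of_notMem hS hM hwS
    rwa [hM.1.eq_of_adj_left hwx hwx']

end Finite

theorem stmt_4 [Fintype V] (G : SimpleGraph V) (hKE : KonigEgervary G)
    (hiso : ∀ v : V, ∃ w : V, G.Adj v w) (v : V) (hcore : coreSet G = {v}) :
    (∃ M : SimpleGraph.Subgraph G, M.IsPerfectMatching) ∧ (G.neighborSet v).ncard = 1 := by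
  obtain ⟨M, hM⟩ := exists_isMaxMatching G
  have hcore_eq : ∀ {u}, u ∈ coreSet G → u = v := fun hu => by rwa [hcore] at hu
  have hmatched : ∀ {u}, u ≠ v → u ∈ M.verts := fun huv => by
    by_contra hu
    exact huv (hcore_eq (hKE.mem_coreSet_of_notMem_verts hM hu))
  have hadj : ∀ {w}, G.Adj v w → M.Adj v w := fun hvw => by
    obtain ⟨x, hwx, -⟩ := hM.1 (hmatched hvw.ne')
    obtain rfl := hcore_eq (hKE.mem_coreSet_of_adj_of_adj hM (hcore ▸ rfl) hvw hwx)
    exact hwx.symm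
  obtain ⟨w, hvw⟩ := hiso v
  refine ⟨⟨M, hM.1, fun u => ?_⟩, ?_⟩
  · rcases eq_or_ne u v with rfl | huv
    · exact (hadj hvw).fst_mem
    · exact hmatched huv
  · have hnbr : G.neighborSet v = {w} :=
      Set.ext fun x => ⟨fun hvx => hM.1.eq_of_adj_left (hadj hvx) (hadj hvw), fun h => h ▸ hvw⟩
    rw [hnbr, Set.ncard_singleton]
end

section
/- If A is a critical independent set of a graph G and X = A ∪ N(A), then α(G) = α(G[X]) + α(G - X). -/
open SimpleGraph

variable {V : Type*}

section Aux

variable {V : Type*}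

lemma isIndep_empty (G : SimpleGraph V) : IsIndep G (∅ : Set V) := Set.pairwise_empty _

lemma alphaNum_bddAbove [Finite V] (G : SimpleGraph V) :
    BddAbove {n | ∃ s : Set V, IsIndep G s ∧ s.ncard = n} := by
  refine ⟨Nat.card V, ?_⟩
  rintro n ⟨s, -, rfl⟩
  calc s.ncard ≤ (Set.univ : Set V).ncard :=
        Set.ncard_le_ncard (Set.subset_univ s) Set.finite_univ
    _ = Nat.card V := Set.ncard_univ V

lemma indep_ncard_le_alphaNum [Finite V] {G : SimpleGraph V} {s : Set V}
    (h : IsIndep G s) : s.ncard ≤ alphaNum G :=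
  le_csSup (alphaNum_bddAbove G) ⟨s, h, rfl⟩

lemma exists_max_indep [Finite V] (G : SimpleGraph V) :
    ∃ S : Set V, IsIndep G S ∧ S.ncard = alphaNum G := by
  have h : alphaNum G ∈ {n | ∃ s : Set V, IsIndep G s ∧ s.ncard = n} :=
    Nat.sSup_mem ⟨0, ∅, isIndep_empty G, Set.ncard_empty V⟩ (alphaNum_bddAbove G)
  exact h

lemma diffSet_le_critDiff [Finite V] {G : SimpleGraph V} {I : Set V}
    (h : IsIndep G I) : diffSet G I ≤ critDiff G := by
  refine le_csSup ⟨(Nat.card V : ℤ), ?_⟩ ⟨I, h, rfl⟩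
  rintro d ⟨s, -, rfl⟩
  have h1 : (s.ncard : ℤ) ≤ Nat.card V := by
    exact_mod_cast (Set.ncard_le_ncard (Set.subset_univ s) Set.finite_univ).trans_eq
      (Set.ncard_univ V)
  have h2 : (0 : ℤ) ≤ ((nbhd G s).ncard : ℤ) := Int.natCast_nonneg _
  unfold diffSet
  omega

lemma indep_image {G : SimpleGraph V} {X : Set V} {s : Set ↥X}
    (h : IsIndep (G.induce X) s) : IsIndep G (Subtype.val '' s) := by
  rintro _ ⟨a, ha, rfl⟩ _ ⟨b, hb, rfl⟩ hne hadj
  have hab : a ≠ b := fun e => hne (by rw [e])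
  exact h ha hb hab hadj

lemma indep_preimage {G : SimpleGraph V} {X : Set V} {s : Set V}
    (h : IsIndep G s) : IsIndep (G.induce X) (Subtype.val ⁻¹' s) := by
  intro a ha b hb hne hadj
  exact h ha hb (Subtype.coe_injective.ne hne) hadj

lemma le_alpha_induce [Finite V] {G : SimpleGraph V} {X s : Set V}
    (hsX : s ⊆ X) (hs : IsIndep G s) : s.ncard ≤ alphaNum (G.induce X) := by
  have h1 : IsIndep (G.induce X) (Subtype.val ⁻¹' s) := indep_preimage hs
  have h2 : (Subtype.val ⁻¹' s : Set ↥X).ncard = s.ncard := by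
    rw [← Set.ncard_image_of_injective _ Subtype.coe_injective,
      Subtype.image_preimage_coe, Set.inter_eq_self_of_subset_right hsX]
  exact h2 ▸ indep_ncard_le_alphaNum h1

lemma exists_indep_of_induce [Finite V] (G : SimpleGraph V) (X : Set V) :
    ∃ I : Set V, I ⊆ X ∧ IsIndep G I ∧ I.ncard = alphaNum (G.induce X) := by
  obtain ⟨S, hS, hcard⟩ := exists_max_indep (G.induce X)
  refine ⟨Subtype.val '' S, ?_, indep_image hS, ?_⟩
  · rintro _ ⟨a, -, rfl⟩; exact a.2
  · rw [Set.ncard_image_of_injective _ Subtype.coe_injective, hcard]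

lemma inter_nbhd_empty {G : SimpleGraph V} {A : Set V} (hA : IsIndep G A) :
    A ∩ nbhd G A = ∅ := by
  ext a
  simp only [Set.mem_inter_iff, Set.mem_empty_iff_false, iff_false, not_and]
  rintro haA ⟨b, hbA, hadj⟩
  exact hA hbA haA (G.ne_of_adj hadj) hadj

/-- Core counting lemma: any independent set inside `A ∪ N(A)` has size at most `|A|`
when `A` is a critical independent set. -/
lemma key_count [Finite V] {G : SimpleGraph V} {A I : Set V}
    (hA : IsCriticalIndep G A) (hI : IsIndep G I) (hIX : I ⊆ A ∪ nbhd G A) :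
    I.ncard ≤ A.ncard := by
  obtain ⟨hAind, hAcrit⟩ := hA
  set N := nbhd G A with hN
  set B := I ∩ N with hB
  set A2 := A \ nbhd G B with hA2
  -- A2 is independent
  have h1 : IsIndep G A2 := hAind.mono Set.diff_subset
  have h2 : diffSet G A2 ≤ diffSet G A := hAcrit ▸ diffSet_le_critDiff h1
  -- N(A2) ⊆ N \ B
  have h3 : nbhd G A2 ⊆ N \ B := by
    rintro v ⟨a, ⟨haA, hanb⟩, hadj⟩
    refine ⟨⟨a, haA, hadj⟩, fun hvB => hanb ⟨v, hvB, hadj.symm⟩⟩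
  have hBN : B ⊆ N := Set.inter_subset_right
  have h4 : (nbhd G A2).ncard + B.ncard ≤ N.ncard := by
    have := Set.ncard_le_ncard h3 (Set.toFinite _)
    have := Set.ncard_diff_add_ncard_of_subset hBN (Set.toFinite N)
    omega
  have h5 : (A ∩ nbhd G B).ncard + A2.ncard = A.ncard :=
    Set.ncard_inter_add_ncard_diff_eq_ncard A (nbhd G B) (Set.toFinite A)
  -- from criticality: |B| ≤ |A ∩ N(B)|
  have h6 : B.ncard ≤ (A ∩ nbhd G B).ncard := by
    have e1 : (A2.ncard : ℤ) - (nbhd G A2).ncard ≤ (A.ncard : ℤ) - N.ncard := h2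
    omega
  -- A ∩ N(B) ⊆ A \ I
  have h7 : A ∩ nbhd G B ⊆ A \ I := by
    rintro a ⟨haA, b, hbB, hadj⟩
    refine ⟨haA, fun haI => ?_⟩
    exact hI hbB.1 haI (G.ne_of_adj hadj) hadj
  have h8 : (A ∩ nbhd G B).ncard ≤ (A \ I).ncard :=
    Set.ncard_le_ncard h7 (Set.toFinite _)
  -- |I| = |I ∩ A| + |B|
  have hdisj : Disjoint (I ∩ A) B := by
    have := inter_nbhd_empty hAind
    rw [Set.disjoint_iff]
    rintro x ⟨⟨-, hxA⟩, -, hxN⟩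
    exact absurd (Set.mem_inter hxA hxN) (by rw [this]; exact id)
  have hIsplit : (I ∩ A) ∪ B = I := by
    rw [hB, ← Set.inter_union_distrib_left]
    exact Set.inter_eq_self_of_subset_left hIX
  have h9 : (I ∩ A).ncard + B.ncard = I.ncard := by
    rw [← Set.ncard_union_eq hdisj (Set.toFinite _) (Set.toFinite _), hIsplit]
  have h10 : (A \ I).ncard + (A ∩ I).ncard = A.ncard := by
    have := Set.ncard_inter_add_ncard_diff_eq_ncard A I (Set.toFinite A)
    omega
  have h11 : (I ∩ A).ncard = (A ∩ I).ncard := by rw [Set.inter_comm]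
  omega

end Aux

theorem stmt_7 [Fintype V] (G : SimpleGraph V) (A : Set V)
    (hA : IsCriticalIndep G A) :
    alphaNum G = alphaNum (G.induce (A ∪ nbhd G A)) + alphaNum (G.induce (A ∪ nbhd G A)ᶜ) := by
  classical
  set X := A ∪ nbhd G A with hX
  obtain ⟨hAind, -⟩ := id hA
  apply le_antisymm
  · -- α(G) ≤ α(G[X]) + α(G-X)
    obtain ⟨S, hS, hScard⟩ := exists_max_indep G
    have h1 : (S ∩ X).ncard ≤ alphaNum (G.induce X) :=
      le_alpha_induce Set.inter_subset_right (hS.mono Set.inter_subset_left)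
    have h2 : (S \ X).ncard ≤ alphaNum (G.induce Xᶜ) := by
      refine le_alpha_induce ?_ (hS.mono Set.diff_subset)
      rintro x ⟨-, hx⟩; exact hx
    have h3 : (S ∩ X).ncard + (S \ X).ncard = S.ncard :=
      Set.ncard_inter_add_ncard_diff_eq_ncard S X (Set.toFinite S)
    omega
  · -- α(G[X]) + α(G-X) ≤ α(G)
    obtain ⟨I, hIX, hIind, hIcard⟩ := exists_indep_of_induce G X
    obtain ⟨J, hJX, hJind, hJcard⟩ := exists_indep_of_induce G Xᶜ
    have hIA : I.ncard ≤ A.ncard := key_count hA hIind hIX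
    -- A ∪ J is independent
    have hcross : ∀ a ∈ A, ∀ j ∈ J, ¬ G.Adj a j := by
      intro a haA j hjJ hadj
      exact hJX hjJ (Set.mem_union_right _ ⟨a, haA, hadj⟩)
    have hAJ : IsIndep G (A ∪ J) := by
      rintro x (hx | hx) y (hy | hy) hne hadj
      · exact hAind hx hy hne hadj
      · exact hcross x hx y hy hadj
      · exact hcross y hy x hx hadj.symm
      · exact hJind hx hy hne hadj
    have hdisj : Disjoint A J := by
      rw [Set.disjoint_iff]
      rintro x ⟨hxA, hxJ⟩
      exact hJX hxJ (Set.mem_union_left _ hxA)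
    have hcard : (A ∪ J).ncard = A.ncard + J.ncard :=
      Set.ncard_union_eq hdisj (Set.toFinite _) (Set.toFinite _)
    have := indep_ncard_le_alphaNum hAJ
    omega
end

section
/- Let A and S be independent sets in a graph G with A critical and A ⊆ S. Then there is a matching from S - A into V(G) - S - N(A). -/
open SimpleGraph

variable {V : Type*}

theorem stmt_11 [Fintype V] (G : SimpleGraph V) (A S : Set V)
    (hA : IsCriticalIndep G A) (hS : IsIndep G S) (hAS : A ⊆ S) :
    ∃ f : (S \ A : Set V) → V, Function.Injective f ∧
      ∀ x : (S \ A : Set V), f x ∉ S ∧ f x ∉ nbhd G A ∧ G.Adj ↑x (f x) := by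

  classical
  -- Any independent set has difference at most the critical difference.
  have hle : ∀ I : Set V, IsIndep G I → diffSet G I ≤ critDiff G := by
    intro I hI
    have hmem : diffSet G I ∈ {d | ∃ I : Set V, IsIndep G I ∧ diffSet G I = d} := ⟨I, hI, rfl⟩
    refine le_csSup ?_ hmem
    have hsub : {d | ∃ I : Set V, IsIndep G I ∧ diffSet G I = d} ⊆
        (fun I => diffSet G I) '' Set.univ := by
      rintro d ⟨I, _, rfl⟩; exact ⟨I, trivial, rfl⟩
    exact ((Set.finite_univ.image _).subset hsub).bddAbove
  -- Key counting inequality from criticality of A.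
  have hkey : ∀ X : Set V, X ⊆ S \ A →
      (X.ncard : ℤ) ≤ ((nbhd G X \ nbhd G A).ncard : ℤ) := by
    intro X hX
    have hXS : X ⊆ S := fun x hx => (hX hx).1
    have hBindep : IsIndep G (A ∪ X) := hS.mono (Set.union_subset hAS hXS)
    have h1 : diffSet G (A ∪ X) ≤ diffSet G A := hA.2 ▸ hle _ hBindep
    have hdisj : Disjoint A X := by
      rw [Set.disjoint_right]; intro x hx; exact (hX hx).2
    have hcardU : (A ∪ X).ncard = A.ncard + X.ncard :=
      Set.ncard_union_eq hdisj A.toFinite X.toFinite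
    have hnb : nbhd G (A ∪ X) = nbhd G A ∪ nbhd G X := by
      ext v
      simp only [nbhd, Set.mem_setOf_eq, Set.mem_union]
      constructor
      · rintro ⟨a, ha | ha, hadj⟩
        · exact Or.inl ⟨a, ha, hadj⟩
        · exact Or.inr ⟨a, ha, hadj⟩
      · rintro (⟨a, ha, hadj⟩ | ⟨a, ha, hadj⟩)
        · exact ⟨a, Or.inl ha, hadj⟩
        · exact ⟨a, Or.inr ha, hadj⟩
    have hnbcard : (nbhd G A ∪ nbhd G X).ncard
        = (nbhd G A).ncard + (nbhd G X \ nbhd G A).ncard := by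
      rw [← Set.union_diff_self]
      exact Set.ncard_union_eq Set.disjoint_sdiff_right
        (nbhd G A).toFinite (nbhd G X \ nbhd G A).toFinite
    simp only [diffSet, hcardU, hnb, hnbcard] at h1
    push_cast at h1
    linarith
  -- The neighborhood of a subset of S avoids S.
  have hNS : ∀ X : Set V, X ⊆ S → ∀ v ∈ nbhd G X, v ∉ S := by
    rintro X hXS v ⟨a, haX, hadj⟩ hvS
    exact hS (hXS haX) hvS (G.ne_of_adj hadj) hadj
  -- Set up Hall's theorem.
  set C : Set V := S ∪ nbhd G A with hC
  let t : (S \ A : Set V) → Finset V := fun x => (G.neighborSet ↑x \ C).toFinite.toFinset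
  have hhall : ∀ s : Finset (S \ A : Set V), s.card ≤ (s.biUnion t).card := by
    intro s
    set Xf : Finset V := s.image Subtype.val with hXf
    set X : Set V := ↑Xf with hXdef
    have hXsub : X ⊆ S \ A := by
      intro v hv
      simp only [hXdef, hXf, Finset.coe_image, Set.mem_image, Finset.mem_coe] at hv
      obtain ⟨x, _, rfl⟩ := hv
      exact x.2
    have hcards : s.card = X.ncard := by
      rw [hXdef, Set.ncard_coe_finset, hXf, Finset.card_image_of_injective _ Subtype.val_injective]
    have hbU : (↑(s.biUnion t) : Set V) = nbhd G X \ nbhd G A := by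
      ext v
      simp only [Finset.coe_biUnion, Set.mem_iUnion, Finset.mem_coe, Set.mem_diff,
        Set.Finite.mem_toFinset, t, SimpleGraph.mem_neighborSet, hC, Set.mem_union,
        not_or]
      constructor
      · rintro ⟨x, hx, hadj, hvS, hvN⟩
        refine ⟨⟨↑x, ?_, hadj⟩, hvN⟩
        simp only [hXdef, hXf, Finset.coe_image, Set.mem_image, Finset.mem_coe]
        exact ⟨x, hx, rfl⟩
      · rintro ⟨⟨a, haX, hadj⟩, hvN⟩
        have := haX
        simp only [hXdef, hXf, Finset.coe_image, Set.mem_image, Finset.mem_coe] at this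
        obtain ⟨x, hx, rfl⟩ := this
        exact ⟨x, hx, hadj, hNS X (fun y hy => (hXsub hy).1) v ⟨↑x, haX, hadj⟩, hvN⟩
    have hbcard : (s.biUnion t).card = (nbhd G X \ nbhd G A).ncard := by
      rw [← hbU, Set.ncard_coe_finset]
    have := hkey X hXsub
    rw [hcards, hbcard]
    exact_mod_cast this
  obtain ⟨f, hinj, hf⟩ := (Finset.all_card_le_biUnion_card_iff_exists_injective t).mp hhall
  refine ⟨f, hinj, fun x => ?_⟩
  have := hf x
  simp only [t, Set.Finite.mem_toFinset, Set.mem_diff, SimpleGraph.mem_neighborSet, hC,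
    Set.mem_union, not_or] at this
  exact ⟨this.2.1, this.2.2, this.1⟩
end

section
/- Let G be a König-Egerváry graph and v ∈ V(G) such that G - v is also König-Egerváry. Then v ∈ core(G) if and only if there exists a maximum matching of G that does not saturate v. -/
open SimpleGraph

variable {V : Type*}

/-! With `H = G - v`, deleting a vertex can only lower α and μ, while the König–Egerváry
identities for `G` and `H` give `(α(G) - α(H)) + (μ(G) - μ(H)) = 1`: exactly one of the two
drops. Now `v ∈ core(G)` iff no maximum independent set of `G` lives in `H`, i.e. iff α drops,
and some maximum matching of `G` misses `v` iff μ does not drop. -/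

namespace SimpleGraph

variable {G : SimpleGraph V}

section Finite

variable [Finite V]

lemma bddAbove_indep_ncard (G : SimpleGraph V) :
    BddAbove {n | ∃ s : Set V, IsIndep G s ∧ s.ncard = n} := by
  refine ⟨Nat.card V, ?_⟩
  rintro _ ⟨s, -, rfl⟩
  exact Set.ncard_le_card s

lemma ncard_le_alphaNum {s : Set V} (hs : IsIndep G s) : s.ncard ≤ alphaNum G :=
  le_csSup (bddAbove_indep_ncard G) ⟨s, hs, rfl⟩

lemma exists_isMaxIndep (G : SimpleGraph V) : ∃ S, IsMaxIndep G S :=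
  Nat.sSup_mem (s := {n | ∃ s : Set V, IsIndep G s ∧ s.ncard = n})
    ⟨0, ∅, by simp [IsIndep], by simp⟩ (bddAbove_indep_ncard G)

lemma bddAbove_matching_ncard (G : SimpleGraph V) :
    BddAbove {n | ∃ M : G.Subgraph, M.IsMatching ∧ M.edgeSet.ncard = n} := by
  refine ⟨Nat.card (Sym2 V), ?_⟩
  rintro _ ⟨M, -, rfl⟩
  exact Set.ncard_le_card M.edgeSet

lemma ncard_le_muNum {M : G.Subgraph} (hM : M.IsMatching) : M.edgeSet.ncard ≤ muNum G :=
  le_csSup (bddAbove_matching_ncard G) ⟨M, hM, rfl⟩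

lemma exists_isMatching_ncard_eq_muNum (G : SimpleGraph V) :
    ∃ M : G.Subgraph, M.IsMatching ∧ M.edgeSet.ncard = muNum G :=
  Nat.sSup_mem (s := {n | ∃ M : G.Subgraph, M.IsMatching ∧ M.edgeSet.ncard = n})
    ⟨0, ⊥, by simp [Subgraph.IsMatching], by simp⟩ (bddAbove_matching_ncard G)

end Finite

section Induce

variable {s : Set V}

lemma isIndep_image_val_iff {T : Set s} :
    IsIndep G (Subtype.val '' T) ↔ IsIndep (G.induce s) T := by
  constructor
  · intro h a ha b hb hab
    simpa using h (Set.mem_image_of_mem _ ha) (Set.mem_image_of_mem _ hb)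
      (Subtype.val_injective.ne hab)
  · rintro h _ ⟨a, ha, rfl⟩ _ ⟨b, hb, rfl⟩ hab
    simpa using h ha hb (fun h => hab (congrArg _ h))

lemma Subgraph.map_comap_induce {M : G.Subgraph} (hM : M.verts ⊆ s) :
    (M.comap (Embedding.induce s).toHom).map (Embedding.induce s).toHom = M := by
  ext a b
  · simpa using fun ha => hM ha
  · simp only [Subgraph.map_adj, Subgraph.comap_adj, Relation.Map]
    constructor
    · rintro ⟨a, b, ⟨-, hab⟩, rfl, rfl⟩
      exact hab
    · intro hab
      exact ⟨⟨a, hM (M.edge_vert hab)⟩, ⟨b, hM (M.edge_vert hab.symm)⟩, ⟨M.adj_sub hab, hab⟩,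
        rfl, rfl⟩

lemma Subgraph.IsMatching.comap_induce {M : G.Subgraph} (hM : M.verts ⊆ s)
    (hMm : M.IsMatching) : (M.comap (Embedding.induce s).toHom).IsMatching := by
  rintro a (ha : a.1 ∈ M.verts)
  obtain ⟨w, hw, huniq⟩ := hMm ha
  refine ⟨⟨w, hM (M.edge_vert hw.symm)⟩, ⟨M.adj_sub hw, hw⟩, ?_⟩
  rintro b ⟨-, hb⟩
  exact Subtype.ext (huniq b hb)

variable [Finite V]

lemma alphaNum_induce_le (G : SimpleGraph V) (s : Set V) :
    alphaNum (G.induce s) ≤ alphaNum G := by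
  obtain ⟨T, hT, hTcard⟩ := exists_isMaxIndep (G.induce s)
  rw [← hTcard, ← Set.ncard_image_of_injective T Subtype.val_injective]
  exact ncard_le_alphaNum (isIndep_image_val_iff.mpr hT)

lemma exists_isMaxIndep_subset_iff :
    (∃ S, IsMaxIndep G S ∧ S ⊆ s) ↔ alphaNum G ≤ alphaNum (G.induce s) := by
  constructor
  · rintro ⟨S, ⟨hS, hScard⟩, hSs⟩
    have hS' : Subtype.val '' (Subtype.val ⁻¹' S : Set s) = S := by
      rw [Subtype.image_preimage_coe, Set.inter_eq_right.mpr hSs]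
    rw [← hScard, ← hS', Set.ncard_image_of_injective _ Subtype.val_injective]
    exact ncard_le_alphaNum (isIndep_image_val_iff.mp (by rwa [hS']))
  · intro hle
    obtain ⟨T, hT, hTcard⟩ := exists_isMaxIndep (G.induce s)
    refine ⟨Subtype.val '' T, ⟨isIndep_image_val_iff.mpr hT, ?_⟩, Subtype.coe_image_subset s T⟩
    rw [Set.ncard_image_of_injective T Subtype.val_injective, hTcard]
    exact le_antisymm (alphaNum_induce_le G s) hle

lemma muNum_induce_le (G : SimpleGraph V) (s : Set V) : muNum (G.induce s) ≤ muNum G := by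
  obtain ⟨M, hM, hMcard⟩ := exists_isMatching_ncard_eq_muNum (G.induce s)
  have hinj : Function.Injective (Embedding.induce (G := G) s).toHom := RelEmbedding.injective _
  rw [← hMcard, ← Set.ncard_image_of_injective _ (Sym2.map.injective hinj),
    ← Subgraph.edgeSet_map]
  exact ncard_le_muNum (hM.map _ hinj)

lemma exists_isMatching_ncard_eq_muNum_verts_subset_iff :
    (∃ M : G.Subgraph, M.IsMatching ∧ M.edgeSet.ncard = muNum G ∧ M.verts ⊆ s) ↔
      muNum G ≤ muNum (G.induce s) := by
  have hinj : Function.Injective (Embedding.induce (G := G) s).toHom := RelEmbedding.injective _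
  constructor
  · rintro ⟨M, hM, hMcard, hMs⟩
    rw [← hMcard, ← Subgraph.map_comap_induce hMs, Subgraph.edgeSet_map,
      Set.ncard_image_of_injective _ (Sym2.map.injective hinj)]
    exact ncard_le_muNum (hM.comap_induce hMs)
  · intro hle
    obtain ⟨M, hM, hMcard⟩ := exists_isMatching_ncard_eq_muNum (G.induce s)
    refine ⟨M.map (Embedding.induce s).toHom, hM.map _ hinj, ?_, ?_⟩
    · rw [Subgraph.edgeSet_map, Set.ncard_image_of_injective _ (Sym2.map.injective hinj), hMcard]
      exact le_antisymm (muNum_induce_le G s) hle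
    · rintro _ ⟨a, -, rfl⟩
      exact a.2

end Induce

lemma mem_coreSet_iff [Finite V] {v : V} :
    v ∈ coreSet G ↔ alphaNum (G.induce {v}ᶜ) < alphaNum G := by
  rw [← not_le, ← exists_isMaxIndep_subset_iff]
  simp [coreSet, Set.subset_compl_singleton_iff]

end SimpleGraph

theorem stmt_13 [Fintype V] (G : SimpleGraph V) (hKE : KonigEgervary G) (v : V)
    (hKEv : KonigEgervary (G.induce ({v}ᶜ : Set V))) :
    v ∈ coreSet G ↔
      ∃ M : SimpleGraph.Subgraph G, M.IsMatching ∧ M.edgeSet.ncard = muNum G ∧ v ∉ M.verts := by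
  simp_rw [← Set.subset_compl_singleton_iff, exists_isMatching_ncard_eq_muNum_verts_subset_iff,
    mem_coreSet_iff]
  have hcard : Nat.card ({v}ᶜ : Set V) + 1 = Nat.card V := by
    rw [Nat.card_coe_set_eq, ← Set.ncard_add_ncard_compl {v}, Set.ncard_singleton, add_comm]
  have hα := alphaNum_induce_le G {v}ᶜ
  have hμ := muNum_induce_le G {v}ᶜ
  unfold KonigEgervary at hKE hKEv
  omega
end
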